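/- For 0 ≤ y ≤ x < 1 and parameters α, β, β' > 0 with γ = β + β', the change of variable v = (1−y)u/(1−yu) yields ∫₀¹ u^{α−1}(1−u)^{γ−α−1}(1−xu)^{−β}(1−yu)^{−β'} du = (1−y)^{−α} ∫₀¹ v^{α−1}(1−v)^{γ−α−1}(1 − ((x−y)/(1−y))v)^{−β} dv, assuming γ > α > 0. -/

import Mathlib

/-! The Möbius map `u ↦ (1 - y) u / (1 - y u)` fixes `0` and `1` and is increasing on `[0, 1]`
with derivative `(1 - y) / (1 - y u)²`. Under it `v`, `1 - v` and `1 - c v`, with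
`c = (x - y) / (1 - y)`, become `(1 - y) u`, `1 - u` and `1 - x u`, each divided by `1 - y u`;
together with the Jacobian the powers of `1 - y u` collect to `(1 - y u) ^ (-β')` since
`γ = β + β'`. -/

open intervalIntegral Real Set

noncomputable def unitMobius (y u : ℝ) : ℝ := (1 - y) * u / (1 - y * u)

section

variable {x y u : ℝ}

lemma one_sub_mul_pos_of_mem_Icc (hy : y < 1) (hu : u ∈ Icc (0:ℝ) 1) : 0 < 1 - y * u := by
  rcases le_total 0 y with h | h
  · nlinarith [mul_le_mul_of_nonneg_left hu.2 h]
  · nlinarith [mul_nonpos_of_nonpos_of_nonneg h hu.1]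

lemma unitMobius_zero (y : ℝ) : unitMobius y 0 = 0 := by simp [unitMobius]

lemma unitMobius_one (hy : y ≠ 1) : unitMobius y 1 = 1 := by
  simp [unitMobius, sub_ne_zero.2 hy.symm]

lemma hasDerivAt_unitMobius (hyu : 1 - y * u ≠ 0) :
    HasDerivAt (unitMobius y) ((1 - y) / (1 - y * u) ^ 2) u := by
  refine (((hasDerivAt_id' u).const_mul (1 - y)).div
    (((hasDerivAt_id' u).const_mul y).const_sub 1) hyu).congr_deriv ?_
  field_simp
  ring

lemma one_sub_unitMobius (hyu : 1 - y * u ≠ 0) :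
    1 - unitMobius y u = (1 - u) / (1 - y * u) := by
  rw [unitMobius]; field_simp; ring

lemma one_sub_mul_unitMobius (hy : y ≠ 1) (hyu : 1 - y * u ≠ 0) :
    1 - (x - y) / (1 - y) * unitMobius y u = (1 - x * u) / (1 - y * u) := by
  have : 1 - y ≠ 0 := sub_ne_zero.2 hy.symm
  rw [unitMobius]; field_simp; ring

theorem integral_comp_unitMobius {E : Type*} [NormedAddCommGroup E] [NormedSpace ℝ E]
    (hy : y < 1) (g : ℝ → E) :
    ∫ v in (0:ℝ)..1, g v =
      ∫ u in (0:ℝ)..1, ((1 - y) / (1 - y * u) ^ 2) • g (unitMobius y u) := by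
  have hcont : ContinuousOn (unitMobius y) (Icc 0 1) :=
    ContinuousOn.div (by fun_prop) (by fun_prop) fun u hu => (one_sub_mul_pos_of_mem_Icc hy hu).ne'
  have h := MeasureTheory.integral_Icc_deriv_smul_of_deriv_nonneg (g := g) hcont
    (fun u hu => hasDerivAt_unitMobius (one_sub_mul_pos_of_mem_Icc hy (Ioo_subset_Icc_self hu)).ne')
    (fun u _ => div_nonneg (sub_nonneg.2 hy.le) (sq_nonneg _)) zero_le_one
  rw [unitMobius_zero, unitMobius_one hy.ne] at h
  simp only [integral_of_le zero_le_one, ← MeasureTheory.integral_Icc_eq_integral_Ioc, h]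

lemma jacobian_mul_kernel_unitMobius (hy : y < 1) (hx : x < 1) (hu : u ∈ Icc (0:ℝ) 1)
    (p q r : ℝ) :
    (1 - y) / (1 - y * u) ^ 2 * (unitMobius y u ^ p * (1 - unitMobius y u) ^ q *
      (1 - (x - y) / (1 - y) * unitMobius y u) ^ r)
      = (1 - y) ^ (p + 1) *
        (u ^ p * (1 - u) ^ q * (1 - x * u) ^ r * (1 - y * u) ^ (-(p + q + r + 2))) := by
  have hd := one_sub_mul_pos_of_mem_Icc hy hu
  have hxu := one_sub_mul_pos_of_mem_Icc hx hu
  have hy' : 0 < 1 - y := sub_pos.2 hy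
  rw [one_sub_mul_unitMobius hy.ne hd.ne', one_sub_unitMobius hd.ne', unitMobius,
    div_rpow (mul_nonneg hy'.le hu.1) hd.le, div_rpow (sub_nonneg.2 hu.2) hd.le,
    div_rpow hxu.le hd.le, mul_rpow hy'.le hu.1, rpow_add_one hy'.ne',
    rpow_neg hd.le, rpow_add hd, rpow_add hd, rpow_add hd, rpow_two]
  field_simp

end

theorem stmt_9_general (α β β' γ x y : ℝ) (hγ : γ = β + β')
    (hyx : y ≤ x) (hx1 : x < 1) :
    (∫ u in (0:ℝ)..1,
        u ^ (α - 1) * (1 - u) ^ (γ - α - 1) * (1 - x * u) ^ (-β) * (1 - y * u) ^ (-β'))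
      = (1 - y) ^ (-α) * ∫ v in (0:ℝ)..1,
          v ^ (α - 1) * (1 - v) ^ (γ - α - 1) * (1 - ((x - y) / (1 - y)) * v) ^ (-β) := by
  have hy : y < 1 := hyx.trans_lt hx1
  conv_rhs => rw [integral_comp_unitMobius hy, ← integral_const_mul]
  refine integral_congr fun u hu => ?_
  rw [uIcc_of_le zero_le_one] at hu
  have hexp : -(α - 1 + (γ - α - 1) + -β + 2) = -β' := by rw [hγ]; ring
  simp only [smul_eq_mul]
  rw [jacobian_mul_kernel_unitMobius hy hx1 hu, hexp, ← mul_assoc, ← rpow_add (sub_pos.2 hy)]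
  norm_num

theorem stmt_9 (α β β' γ x y : ℝ) (hβ : 0 < β) (hβ' : 0 < β') (hγ : γ = β + β')
    (hα : 0 < α) (hαγ : α < γ) (hy : 0 ≤ y) (hyx : y ≤ x) (hx1 : x < 1) :
    (∫ u in (0:ℝ)..1,
        u ^ (α - 1) * (1 - u) ^ (γ - α - 1) * (1 - x * u) ^ (-β) * (1 - y * u) ^ (-β'))
      = (1 - y) ^ (-α) * ∫ v in (0:ℝ)..1,
          v ^ (α - 1) * (1 - v) ^ (γ - α - 1) * (1 - ((x - y) / (1 - y)) * v) ^ (-β) :=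
  stmt_9_general α β β' γ x y hγ hyx hx1
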